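/- For the stepset S₂ = {(-1,0,0),(1,-1,1),(1,0,1),(1,1,-1)} with stepset polynomial P = x^{-1} + xy^{-1}z + xz + xyz^{-1}, the associated birational maps φ_x, φ_y, φ_z satisfy (φ_x∘φ_y)² = id and (φ_x∘φ_z)² = id. -/

import Mathlib

/-!
The three maps are involutions wherever they are defined, so `(φ_x ∘ φ_y)² = id` amounts to
`φ_x` and `φ_y` commuting, and likewise for `φ_z`. They do commute: `φ_x` changes only `x`, and
depends on `y, z` only through `A₊(y, z) = y⁻¹z + z + yz⁻¹`, while `φ_y` (`y ↦ z²/y`) and `φ_z`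
(`z ↦ y²/((1 + y)z)`) fix `x` and leave `A₊` invariant, since they swap its terms
`y⁻¹z` and `yz⁻¹`, resp. `y⁻¹z + z = (1 + y)z/y` and `yz⁻¹`.
-/

open MvPolynomial

noncomputable section

/-- The field `ℚ(x,y,z)` of rational functions in three variables. -/
abbrev Fld : Type := FractionRing (MvPolynomial (Fin 3) ℚ)

/-- The variables `x = Xv 0`, `y = Xv 1`, `z = Xv 2` of `ℚ(x,y,z)`. -/
def Xv (i : Fin 3) : Fld := algebraMap (MvPolynomial (Fin 3) ℚ) Fld (X i)

/-- For the stepset `S₂ = {(-1,0,0),(1,-1,1),(1,0,1),(1,1,-1)}` with stepset polynomial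
`P = x⁻¹ + xy⁻¹z + xz + xyz⁻¹`: `A₋ = 1`, `A₊ = y⁻¹z + z + yz⁻¹`, so
`φ_x(x,y,z) = (x⁻¹·1/(y⁻¹z + z + yz⁻¹), y, z)`. -/
def phix : Fld × Fld × Fld → Fld × Fld × Fld := fun t =>
  (t.1⁻¹ * (1 / (t.2.1⁻¹ * t.2.2 + t.2.2 + t.2.1 * t.2.2⁻¹)), t.2.1, t.2.2)

/-- `B₋ = xz`, `B₊ = xz⁻¹`, so `φ_y(x,y,z) = (x, z²/y, z)`. -/
def phiy : Fld × Fld × Fld → Fld × Fld × Fld := fun t =>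
  (t.1, t.2.2 ^ 2 / t.2.1, t.2.2)

/-- `C₋ = xy`, `C₊ = x(y⁻¹+1)`, so `φ_z(x,y,z) = (x, y, z⁻¹·y/(y⁻¹+1))`. -/
def phiz : Fld × Fld × Fld → Fld × Fld × Fld := fun t =>
  (t.1, t.2.1, t.2.2⁻¹ * (t.2.1 / (t.2.1⁻¹ + 1)))

def aPlus (y z : Fld) : Fld := y⁻¹ * z + z + y * z⁻¹

lemma phix_apply (x y z : Fld) : phix (x, y, z) = (x⁻¹ * (1 / aPlus y z), y, z) := rfl

lemma aPlus_eq_div {y z : Fld} (hy : y ≠ 0) (hz : z ≠ 0) :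
    aPlus y z = (z ^ 2 + y * z ^ 2 + y ^ 2) / (y * z) := by
  unfold aPlus
  field_simp

lemma phix_phix {y z : Fld} (x : Fld) (h : aPlus y z ≠ 0) : phix (phix (x, y, z)) = (x, y, z) := by
  simp only [phix_apply, Prod.mk.injEq, and_true]
  field_simp

lemma phiy_phiy {z : Fld} (x y : Fld) (hz : z ≠ 0) : phiy (phiy (x, y, z)) = (x, y, z) := by
  simp only [phiy, Prod.mk.injEq, and_true, true_and]
  exact div_div_cancel₀ (pow_ne_zero 2 hz)

lemma phiz_phiz {y : Fld} (x z : Fld) (hy : y ≠ 0) (hy' : 1 + y ≠ 0) :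
    phiz (phiz (x, y, z)) = (x, y, z) := by
  simp only [phiz, Prod.mk.injEq, true_and]
  field_simp

lemma phix_commute_phiy : Function.Commute phix phiy := by
  rintro ⟨x, y, z⟩
  have aPlus_phiy : aPlus (z ^ 2 / y) z = aPlus y z := by
    rcases eq_or_ne z 0 with rfl | hz
    · simp [aPlus]
    · unfold aPlus
      field_simp
      ring
  simp only [phix_apply, phiy, aPlus_phiy]

lemma phix_phiz_comm {t : Fld × Fld × Fld} (hy : t.2.1 ≠ 0) (hy' : 1 + t.2.1 ≠ 0) :
    phix (phiz t) = phiz (phix t) := by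
  obtain ⟨x, y, z⟩ := t
  have aPlus_phiz : aPlus y (z⁻¹ * (y / (y⁻¹ + 1))) = aPlus y z := by
    unfold aPlus
    field_simp
    ring
  simp only [phix_apply, phiz, aPlus_phiz]

lemma algebraMap_ne_zero_of_eval_ne_zero {p : MvPolynomial (Fin 3) ℚ} (v : Fin 3 → ℚ)
    (h : eval v p ≠ 0) : algebraMap (MvPolynomial (Fin 3) ℚ) Fld p ≠ 0 := by
  rw [map_ne_zero_iff _ (IsFractionRing.injective _ _)]
  rintro rfl
  exact h (map_zero _)

lemma Xv_ne_zero (i : Fin 3) : Xv i ≠ 0 :=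
  algebraMap_ne_zero_of_eval_ne_zero 1 (by simp)

lemma one_add_Xv_one_ne_zero : 1 + Xv 1 ≠ 0 := by
  convert algebraMap_ne_zero_of_eval_ne_zero (p := 1 + X 1) 1 (by norm_num) using 1
  simp [Xv]

lemma aPlus_Xv_ne_zero : aPlus (Xv 1) (Xv 2) ≠ 0 := by
  rw [aPlus_eq_div (Xv_ne_zero 1) (Xv_ne_zero 2)]
  refine div_ne_zero ?_ (mul_ne_zero (Xv_ne_zero 1) (Xv_ne_zero 2))
  convert algebraMap_ne_zero_of_eval_ne_zero (p := X 2 ^ 2 + X 1 * X 2 ^ 2 + X 1 ^ 2) 1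
    (by norm_num) using 1
  simp [Xv]

/-- For the model `S₂`, the birational maps satisfy `(φ_x∘φ_y)² = id` and
`(φ_x∘φ_z)² = id` (as birational transformations, i.e. at the generic point `(x,y,z)`). -/
theorem stmt14 :
    phix (phiy (phix (phiy (Xv 0, Xv 1, Xv 2)))) = (Xv 0, Xv 1, Xv 2) ∧
    phix (phiz (phix (phiz (Xv 0, Xv 1, Xv 2)))) = (Xv 0, Xv 1, Xv 2) := by
  constructor
  · calc phix (phiy (phix (phiy (Xv 0, Xv 1, Xv 2))))
        = phix (phix (phiy (phiy (Xv 0, Xv 1, Xv 2)))) := by rw [← phix_commute_phiy]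
      _ = (Xv 0, Xv 1, Xv 2) := by
        rw [phiy_phiy _ _ (Xv_ne_zero 2), phix_phix _ aPlus_Xv_ne_zero]
  · calc phix (phiz (phix (phiz (Xv 0, Xv 1, Xv 2))))
        = phix (phix (phiz (phiz (Xv 0, Xv 1, Xv 2)))) := by
          rw [← phix_phiz_comm (Xv_ne_zero 1) one_add_Xv_one_ne_zero]
      _ = (Xv 0, Xv 1, Xv 2) := by
        rw [phiz_phiz _ _ (Xv_ne_zero 1) one_add_Xv_one_ne_zero, phix_phix _ aPlus_Xv_ne_zero]
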